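/- For every α > 4/9 there exist a, b > 0 with a ≠ b such that T(a,b) < α·D(a,b) + (1−α)·H(a,b); in fact, there exists δ > 0 such that this inequality holds for all a, b > 0 with a/b ∈ (1, 1+δ). -/

import Mathlib

noncomputable def harmonicMean (a b : ℝ) : ℝ := 2 * a * b / (a + b)

noncomputable def seiffertT (a b : ℝ) : ℝ := (a - b) / (2 * Real.arctan ((a - b) / (a + b)))

noncomputable def contraD (a b : ℝ) : ℝ := (a ^ 3 + b ^ 3) / (a ^ 2 + b ^ 2)

/-!
Write `a = s (1 + t)`, `b = s (1 - t)` with `s = (a + b) / 2` and `0 < t = (a - b) / (a + b)`.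
All three means are then `s` times a function of `t`: `T = s t / arctan t`,
`H = s (1 - t²)` and `D = s (1 + 3t²) / (1 + t²)`. As `t → 0`,
`t / arctan t = 1 + t²/3 + O(t⁴)` while `α D/s + (1 - α) H/s = 1 + (3α - 1) t² + O(t⁴)`,
and `1/3 < 3α - 1` is exactly `4/9 < α`. Quantitatively, `t - t³/3 < arctan t` reduces the
inequality to a polynomial one in `u = t²`.
-/

open Real

lemma Real.sub_pow_three_div_three_lt_arctan {t : ℝ} (ht : 0 < t) : t - t ^ 3 / 3 < arctan t := by
  let f : ℝ → ℝ := fun x ↦ arctan x - x + x ^ 3 / 3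
  have hf : ∀ x, HasDerivAt f (x ^ 4 / (1 + x ^ 2)) x := fun x ↦
    (((hasDerivAt_arctan x).sub (hasDerivAt_id x)).add
      ((hasDerivAt_pow 3 x).div_const 3)).congr_deriv (by field_simp; ring)
  have hmono : StrictMonoOn f (Set.Ici 0) := by
    refine strictMonoOn_of_deriv_pos (convex_Ici 0)
      (fun x _ ↦ (hf x).continuousAt.continuousWithinAt) fun x hx ↦ ?_
    rw [interior_Ici, Set.mem_Ioi] at hx
    rw [(hf x).deriv]
    positivity
  have := hmono Set.self_mem_Ici ht.le ht
  simp only [f, arctan_zero] at this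
  linarith

/-- The difference of the two sides is `u (3α - 4/3 - u - (α - 1) u² / 3)`, and for `u ≤ 1` the
bracket is at least `(9α - 4 - (α + 3) u) / 3`. -/
lemma one_add_lt_mul_of_mul_lt {α u : ℝ} (hu₀ : 0 < u) (hu₁ : u ≤ 1)
    (hα : u * (α + 3) < 9 * α - 4) :
    1 + u < (1 - u / 3) * (1 + 3 * α * u + (α - 1) * u ^ 2) := by
  have hα₀ : 0 < α := by nlinarith
  nlinarith [mul_le_mul_of_nonneg_left hu₁ (mul_pos hα₀ hu₀).le]

lemma div_arctan_lt_of_mul_lt {α t : ℝ} (ht₀ : 0 < t) (ht₁ : t < 1)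
    (hα : t * (α + 3) < 9 * α - 4) :
    t / arctan t < α * ((1 + 3 * t ^ 2) / (1 + t ^ 2)) + (1 - α) * (1 - t ^ 2) := by
  have hsq : t ^ 2 < t := by nlinarith
  have hpoly := one_add_lt_mul_of_mul_lt (α := α) (u := t ^ 2) (by positivity) (by nlinarith)
    (by nlinarith)
  have harctan := sub_pow_three_div_three_lt_arctan ht₀
  have hcubic : 0 < t - t ^ 3 / 3 := by nlinarith
  have hnum : 0 < 1 + 3 * α * t ^ 2 + (α - 1) * (t ^ 2) ^ 2 := by nlinarith
  have hrhs : α * ((1 + 3 * t ^ 2) / (1 + t ^ 2)) + (1 - α) * (1 - t ^ 2)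
      = (1 + 3 * α * t ^ 2 + (α - 1) * (t ^ 2) ^ 2) / (1 + t ^ 2) := by
    field_simp
    ring
  rw [hrhs, div_lt_div_iff₀ (hcubic.trans harctan) (by positivity)]
  calc t * (1 + t ^ 2)
      < t * ((1 - t ^ 2 / 3) * (1 + 3 * α * t ^ 2 + (α - 1) * (t ^ 2) ^ 2)) :=
        mul_lt_mul_of_pos_left hpoly ht₀
    _ = (1 + 3 * α * t ^ 2 + (α - 1) * (t ^ 2) ^ 2) * (t - t ^ 3 / 3) := by ring
    _ < (1 + 3 * α * t ^ 2 + (α - 1) * (t ^ 2) ^ 2) * arctan t :=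
        mul_lt_mul_of_pos_left harctan hnum

section Means

variable {s : ℝ} (t : ℝ)

lemma seiffertT_mul_one_add_mul_one_sub (hs : s ≠ 0) :
    seiffertT (s * (1 + t)) (s * (1 - t)) = s * (t / arctan t) := by
  have hdiff : s * (1 + t) - s * (1 - t) = 2 * s * t := by ring
  have hsum : s * (1 + t) + s * (1 - t) = 2 * s := by ring
  rw [seiffertT, hdiff, hsum, mul_assoc, mul_div_mul_left _ _ (by positivity)]
  field_simp

lemma harmonicMean_mul_one_add_mul_one_sub (hs : s ≠ 0) :
    harmonicMean (s * (1 + t)) (s * (1 - t)) = s * (1 - t ^ 2) := by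
  rw [harmonicMean]
  field_simp
  ring

lemma contraD_mul_one_add_mul_one_sub (hs : s ≠ 0) :
    contraD (s * (1 + t)) (s * (1 - t)) = s * ((1 + 3 * t ^ 2) / (1 + t ^ 2)) := by
  have hcube : (s * (1 + t)) ^ 3 + (s * (1 - t)) ^ 3 = 2 * s ^ 3 * (1 + 3 * t ^ 2) := by ring
  have hsq : (s * (1 + t)) ^ 2 + (s * (1 - t)) ^ 2 = 2 * s ^ 2 * (1 + t ^ 2) := by ring
  rw [contraD, hcube, hsq]
  field_simp

end Means

theorem stmt_3 (α : ℝ) (hα : 4 / 9 < α) :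
    ∃ δ > (0 : ℝ), ∀ a b : ℝ, 0 < a → 0 < b → a / b ∈ Set.Ioo (1 : ℝ) (1 + δ) →
      seiffertT a b < α * contraD a b + (1 - α) * harmonicMean a b := by
  have hα' : 0 < (9 * α - 4) / (α + 3) := div_pos (by linarith) (by linarith)
  refine ⟨min 1 ((9 * α - 4) / (α + 3)), lt_min one_pos hα', ?_⟩
  rintro a b ha hb ⟨hab, habδ⟩
  rw [one_lt_div hb] at hab
  rw [div_lt_iff₀ hb] at habδ
  set s := (a + b) / 2
  set t := (a - b) / (a + b)
  have hs : 0 < s := by positivity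
  have ht₀ : 0 < t := div_pos (by linarith) (by linarith)
  have htδ : t < min 1 ((9 * α - 4) / (α + 3)) := by
    refine (div_lt_div_of_pos_left (by linarith) hb (by linarith)).trans ?_
    rw [div_lt_iff₀ hb]
    linarith
  have ht₁ : t < 1 := htδ.trans_le (min_le_left _ _)
  have htα : t * (α + 3) < 9 * α - 4 :=
    (lt_div_iff₀ (by linarith)).1 (htδ.trans_le (min_le_right _ _))
  have ha' : a = s * (1 + t) := by simp only [s, t]; field_simp; ring
  have hb' : b = s * (1 - t) := by simp only [s, t]; field_simp; ring
  rw [ha', hb', seiffertT_mul_one_add_mul_one_sub t hs.ne',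
    contraD_mul_one_add_mul_one_sub t hs.ne', harmonicMean_mul_one_add_mul_one_sub t hs.ne',
    mul_left_comm α, mul_left_comm (1 - α), ← mul_add]
  exact mul_lt_mul_of_pos_left (div_arctan_lt_of_mul_lt ht₀ ht₁ htα) hs
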